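/- Let n ≥ 1 be a natural number. The map l ↦ (k ↦ cos(2πlk/n)) from {0, 1, …, ⌈(n+1)/2⌉ − 1} to the space of functions ℤ/nℤ → ℂ is injective, and its range is exactly the cosine class COS(ℤ/nℤ). In particular COS(ℤ/nℤ) has exactly ⌈(n+1)/2⌉ elements, where ⌈·⌉ is the ceiling function. -/

import Mathlib

open Real

/-- The cosine class `COS(G)`: nonzero bounded continuous `φ : G → ℂ` satisfying the
d'Alembert equation `φ(x) φ(y) = (φ(x+y) + φ(x-y))/2`. -/
def CosClass (G : Type*) [AddCommGroup G] [TopologicalSpace G] : Set (G → ℂ) :=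
  {φ | Continuous φ ∧ (∃ C, ∀ x, ‖φ x‖ ≤ C) ∧ φ ≠ 0 ∧
    ∀ x y, φ x * φ y = (φ (x + y) + φ (x - y)) / 2}

/-- `ℤ/nℤ` carries the discrete topology. -/
instance (n : ℕ) : TopologicalSpace (ZMod n) := ⊥

instance (n : ℕ) : DiscreteTopology (ZMod n) := ⟨rfl⟩

/-- The function `k ↦ cos(2πlk/n)` on `ℤ/nℤ`, evaluated via integer representatives. -/
noncomputable def cosZMod (n : ℕ) (l : ℕ) : ZMod n → ℂ :=
  fun k => (Real.cos (2 * π * l * (ZMod.val k) / n) : ℂ)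

open Complex

/-!
A nonzero solution of d'Alembert's equation has `φ 0 = 1`, and along the multiples of a fixed
`x` the equation is the recurrence `φ((k+2)x) = 2 φ(x) φ((k+1)x) - φ(kx)`. Writing
`2 φ(x) = w + w⁻¹`, this gives `φ(kx) = (wᵏ + w⁻ᵏ)/2`. On `ℤ/nℤ`, with `x = 1`, the relation
`φ(n) = φ(0) = 1` forces `wⁿ = 1`, so `w = exp(2πil/n)` and `φ = cos(2πl·/n)`; conversely such a
cosine is the mean of the character `k ↦ wᵏ` and its inverse, hence a solution. Since `l` and
`n - l` give the same cosine, `l` can be taken with `2l ≤ n`, and these cosines are told apart by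
their value at `1`, where `cos` is injective on `[0, π]`.
-/

def IsDAlembert {G : Type*} [AddGroup G] (φ : G → ℂ) : Prop :=
  ∀ x y, φ x * φ y = (φ (x + y) + φ (x - y)) / 2

section DAlembert

variable {G : Type*} [AddGroup G] {φ : G → ℂ}

theorem IsDAlembert.map_zero (hφ : IsDAlembert φ) (hne : φ ≠ 0) : φ 0 = 1 := by
  obtain ⟨x, hx⟩ := Function.ne_iff.mp hne
  have hx0 := hφ x 0
  rw [add_zero, sub_zero] at hx0
  exact mul_left_cancel₀ hx (by linear_combination hx0)

theorem IsDAlembert.map_nsmul (hφ : IsDAlembert φ) (h0 : φ 0 = 1) {x : G} {w v : ℂ}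
    (hwv : w * v = 1) (hx : w + v = 2 * φ x) (k : ℕ) :
    φ (k • x) = (w ^ k + v ^ k) / 2 := by
  induction k using Nat.twoStepInduction with
  | zero => simp [h0]
  | one => simp [hx]
  | more k ihk ihk1 =>
    have hrec := hφ ((k + 1) • x) x
    rw [← succ_nsmul, succ_nsmul x k, add_sub_cancel_right, ← succ_nsmul, ihk1, ihk] at hrec
    linear_combination
      (-2) * hrec - (w ^ (k + 1) + v ^ (k + 1)) / 2 * hx + (w ^ k + v ^ k) / 2 * hwv

end DAlembert

theorem AddChar.isDAlembert {G : Type*} [AddCommGroup G] (χ : AddChar G ℂ) :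
    IsDAlembert fun x => (χ x + χ (-x)) / 2 := by
  intro x y
  simp only [neg_add, sub_eq_add_neg, neg_neg, AddChar.map_add_eq_mul]
  ring

theorem exists_mul_eq_one_and_add_eq_two_mul {K : Type*} [Field K] [IsAlgClosed K] (c : K) :
    ∃ w v : K, w * v = 1 ∧ w + v = 2 * c := by
  obtain ⟨s, hs⟩ := IsAlgClosed.exists_eq_mul_self (c ^ 2 - 1)
  exact ⟨c + s, c - s, by linear_combination hs, by ring⟩

theorem eq_one_of_mul_eq_one_of_add_eq_two {R : Type*} [CommRing R] [NoZeroDivisors R]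
    {a b : R} (hab : a * b = 1) (h : a + b = 2) : a = 1 := by
  have hsq : (a - 1) ^ 2 = 0 := by linear_combination a * h - hab
  exact sub_eq_zero.mp (pow_eq_zero_iff two_ne_zero |>.mp hsq)

section ZMod

variable {n : ℕ}

theorem cosZMod_apply_eq_pow (l : ℕ) (k : ZMod n) :
    cosZMod n l k =
      ((exp (2 * π * I / n) ^ l) ^ k.val + (exp (2 * π * I / n) ^ l)⁻¹ ^ k.val) / 2 := by
  have hexp :
      (exp (2 * π * I / n) ^ l) ^ k.val = exp (((2 * π * l * k.val / n : ℝ) : ℂ) * I) := by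
    rw [← pow_mul, ← Complex.exp_nat_mul]
    push_cast
    ring_nf
  rw [inv_pow, hexp, ← Complex.exp_neg, ← neg_mul, ← two_cos, cosZMod, ofReal_cos]
  ring

theorem cosZMod_sub_self [NeZero n] {l : ℕ} (hl : l ≤ n) : cosZMod n (n - l) = cosZMod n l := by
  have hζ := Complex.isPrimitiveRoot_exp n (NeZero.ne n)
  have hζl : exp (2 * π * I / n) ^ (n - l) = (exp (2 * π * I / n) ^ l)⁻¹ := by
    rw [pow_sub₀ _ (hζ.ne_zero (NeZero.ne n)) hl, hζ.pow_eq_one, one_mul]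
  funext k
  rw [cosZMod_apply_eq_pow, cosZMod_apply_eq_pow, hζl, inv_inv, add_comm]

theorem cosZMod_mem_cosClass [NeZero n] (l : ℕ) : cosZMod n l ∈ CosClass (ZMod n) := by
  have hζl : (exp (2 * π * I / n) ^ l) ^ n = 1 := by
    rw [pow_right_comm, (Complex.isPrimitiveRoot_exp n (NeZero.ne n)).pow_eq_one, one_pow]
  have hχ :
      cosZMod n l = fun k => (AddChar.zmodChar n hζl k + AddChar.zmodChar n hζl (-k)) / 2 := by
    funext k
    rw [cosZMod_apply_eq_pow, AddChar.map_neg_eq_inv, AddChar.zmodChar_apply, inv_pow]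
  refine ⟨continuous_of_discreteTopology, ⟨1, fun k => ?_⟩, fun h => ?_, ?_⟩
  · rw [cosZMod, norm_real]
    exact abs_cos_le_one _
  · simpa [cosZMod] using congrFun h 0
  · rw [hχ]
    exact (AddChar.zmodChar n hζl).isDAlembert

theorem exists_lt_eq_cosZMod_of_mem_cosClass [NeZero n] {φ : ZMod n → ℂ}
    (hφ : φ ∈ CosClass (ZMod n)) : ∃ l < n, φ = cosZMod n l := by
  obtain ⟨-, -, hne, hd : IsDAlembert φ⟩ := hφ
  have h0 := hd.map_zero hne
  obtain ⟨w, v, hwv, hsum⟩ := exists_mul_eq_one_and_add_eq_two_mul (φ 1)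
  have hφw (k : ℕ) : φ k = (w ^ k + v ^ k) / 2 := by
    rw [← hd.map_nsmul h0 hwv hsum, nsmul_one]
  have hwn : w ^ n = 1 := by
    refine eq_one_of_mul_eq_one_of_add_eq_two (by rw [← mul_pow, hwv, one_pow]) ?_
    have hφn := hφw n
    rw [ZMod.natCast_self, h0] at hφn
    linear_combination -2 * hφn
  obtain ⟨l, hl, rfl⟩ :=
    (Complex.isPrimitiveRoot_exp n (NeZero.ne n)).eq_pow_of_pow_eq_one hwn
  refine ⟨l, hl, funext fun k => ?_⟩
  rw [← ZMod.natCast_zmod_val k, hφw, cosZMod_apply_eq_pow, ZMod.natCast_zmod_val,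
    eq_inv_of_mul_eq_one_right hwv]

theorem exists_two_mul_le_eq_cosZMod_of_mem_cosClass [NeZero n] {φ : ZMod n → ℂ}
    (hφ : φ ∈ CosClass (ZMod n)) : ∃ l, 2 * l ≤ n ∧ φ = cosZMod n l := by
  obtain ⟨l, hl, rfl⟩ := exists_lt_eq_cosZMod_of_mem_cosClass hφ
  by_cases h : 2 * l ≤ n
  · exact ⟨l, h, rfl⟩
  · exact ⟨n - l, by omega, (cosZMod_sub_self hl.le).symm⟩

theorem cosZMod_injOn (n : ℕ) : Set.InjOn (cosZMod n) {l | 2 * l ≤ n} := by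
  rintro a (ha : 2 * a ≤ n) b (hb : 2 * b ≤ n) hab
  obtain hn | hn := le_or_gt n 1
  · omega
  have : Fact (1 < n) := ⟨hn⟩
  have hangle (m : ℕ) (hm : 2 * m ≤ n) : 2 * π * m * (1 : ZMod n).val / n ∈ Set.Icc 0 π := by
    rw [ZMod.val_one, Nat.cast_one, mul_one]
    refine ⟨by positivity, ?_⟩
    rw [div_le_iff₀ (by positivity)]
    have : (2 * m : ℝ) ≤ n := by exact_mod_cast hm
    nlinarith [pi_pos]
  have hcos := injOn_cos (hangle a ha) (hangle b hb) (ofReal_injective (congrFun hab 1))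
  rw [ZMod.val_one] at hcos
  field_simp at hcos
  exact_mod_cast hcos

end ZMod

theorem Nat.lt_ceil_add_one_div_two_iff {n l : ℕ} : l < ⌈((n : ℚ) + 1) / 2⌉₊ ↔ 2 * l ≤ n := by
  rw [Nat.lt_ceil, lt_div_iff₀ two_pos]
  norm_cast
  omega

/-- For `n ≥ 1`, the map `l ↦ (k ↦ cos(2πlk/n))` from
`{0, 1, …, ⌈(n+1)/2⌉ − 1}` to the functions `ℤ/nℤ → ℂ` is injective and its range is
exactly `COS(ℤ/nℤ)`; in particular `COS(ℤ/nℤ)` has exactly `⌈(n+1)/2⌉` elements. -/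
theorem cosClass_zmod (n : ℕ) (hn : 1 ≤ n) :
    Function.Injective (fun l : Fin ⌈((n : ℚ) + 1) / 2⌉₊ => cosZMod n (l : ℕ)) ∧
    Set.range (fun l : Fin ⌈((n : ℚ) + 1) / 2⌉₊ => cosZMod n (l : ℕ))
      = CosClass (ZMod n) ∧
    Set.ncard (CosClass (ZMod n)) = ⌈((n : ℚ) + 1) / 2⌉₊ := by
  have : NeZero n := ⟨by omega⟩
  have hinj : Function.Injective (fun l : Fin ⌈((n : ℚ) + 1) / 2⌉₊ => cosZMod n (l : ℕ)) :=
    fun a b hab => Fin.ext <| cosZMod_injOn n (Nat.lt_ceil_add_one_div_two_iff.mp a.isLt)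
      (Nat.lt_ceil_add_one_div_two_iff.mp b.isLt) hab
  have hrange : Set.range (fun l : Fin ⌈((n : ℚ) + 1) / 2⌉₊ => cosZMod n (l : ℕ))
      = CosClass (ZMod n) := by
    refine Set.Subset.antisymm (Set.range_subset_iff.mpr fun l => cosZMod_mem_cosClass l)
      fun φ hφ => ?_
    obtain ⟨l, hl, rfl⟩ := exists_two_mul_le_eq_cosZMod_of_mem_cosClass hφ
    exact ⟨⟨l, Nat.lt_ceil_add_one_div_two_iff.mpr hl⟩, rfl⟩
  refine ⟨hinj, hrange, ?_⟩
  rw [← hrange, Set.ncard_range_of_injective hinj, Nat.card_eq_fintype_card, Fintype.card_fin]
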